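/- arXiv:2305.13793 — 4 statements merged into one kernel-verified Lean document; each statement's English description precedes it below -/
import Mathlib

section
/- Let a > 0 and R > 0. There exists a constant C > 0, depending only on a and R, such that for all 0 < ε < 1, |∫_{−R}^{R} 1/(ε + a x²)² dx − π/(2√a · ε^{3/2})| ≤ C/√ε. -/
/-!
Substituting `x = t / c` with `c = √(a / ε)` turns the integral into
`(ε² c)⁻¹ ∫_{-T}^{T} dt / (1 + t²)² = (ε² c)⁻¹ (T / (1 + T²) + arctan T)`, `T = c R`.
Since `arctan T = π / 2 - arctan u` with `u = 1 / T`, and `T / (1 + T²) = u / (1 + u²)`, the error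
is `(ε² c)⁻¹ g(u)` with `g u = arctan u - u / (1 + u²)`. As `g' u = 2 u² / (1 + u²)²`, we have
`0 ≤ g u ≤ 2 u³ / 3`, and `(ε² c)⁻¹ u³ = 1 / (a² R³)`: the error is in fact bounded uniformly in `ε`.
-/

open Real

lemma hasDerivAt_div_one_add_sq (x : ℝ) :
    HasDerivAt (fun x : ℝ => x / (1 + x ^ 2)) ((1 - x ^ 2) / (1 + x ^ 2) ^ 2) x :=
  ((hasDerivAt_id' x).div ((hasDerivAt_pow 2 x).const_add 1) (by positivity)).congr_deriv
    (by ring)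

lemma integral_one_div_one_add_sq_sq (a b : ℝ) :
    ∫ x in a..b, 1 / (1 + x ^ 2) ^ 2 =
      (b / (1 + b ^ 2) + arctan b) / 2 - (a / (1 + a ^ 2) + arctan a) / 2 := by
  refine intervalIntegral.integral_eq_sub_of_hasDerivAt
    (f := fun x => (x / (1 + x ^ 2) + arctan x) / 2) (fun x _ => ?_) ?_
  · exact (((hasDerivAt_div_one_add_sq x).add (hasDerivAt_arctan x)).div_const 2).congr_deriv
      (by field_simp; ring)
  · exact (continuous_const.div (by fun_prop) fun x => by positivity).intervalIntegrable a b

lemma hasDerivAt_arctan_sub_div_one_add_sq (x : ℝ) :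
    HasDerivAt (fun x : ℝ => arctan x - x / (1 + x ^ 2)) (2 * x ^ 2 / (1 + x ^ 2) ^ 2) x :=
  ((hasDerivAt_arctan x).sub (hasDerivAt_div_one_add_sq x)).congr_deriv (by field_simp; ring)

lemma arctan_sub_div_one_add_sq_nonneg {u : ℝ} (hu : 0 ≤ u) :
    0 ≤ arctan u - u / (1 + u ^ 2) := by
  have hmono : Monotone fun x : ℝ => arctan x - x / (1 + x ^ 2) := by
    refine monotone_of_deriv_nonneg
      (fun x => (hasDerivAt_arctan_sub_div_one_add_sq x).differentiableAt) fun x => ?_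
    rw [(hasDerivAt_arctan_sub_div_one_add_sq x).deriv]
    positivity
  simpa using hmono hu

lemma arctan_sub_div_one_add_sq_le {u : ℝ} (hu : 0 ≤ u) :
    arctan u - u / (1 + u ^ 2) ≤ 2 * u ^ 3 / 3 := by
  have hderiv (x : ℝ) : HasDerivAt (fun x : ℝ => 2 * x ^ 3 / 3 - (arctan x - x / (1 + x ^ 2)))
      (2 * x ^ 2 - 2 * x ^ 2 / (1 + x ^ 2) ^ 2) x :=
    (((hasDerivAt_pow 3 x).const_mul 2).div_const 3).sub
      (hasDerivAt_arctan_sub_div_one_add_sq x) |>.congr_deriv (by ring)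
  have hmono : Monotone fun x : ℝ => 2 * x ^ 3 / 3 - (arctan x - x / (1 + x ^ 2)) := by
    refine monotone_of_deriv_nonneg (fun x => (hderiv x).differentiableAt) fun x => ?_
    rw [(hderiv x).deriv, sub_nonneg]
    exact div_le_self (by positivity) (one_le_pow₀ (by nlinarith))
  simpa using hmono hu

lemma integral_one_div_add_mul_sq_sq {ε a c : ℝ} (hc : c ≠ 0) (hac : a = ε * c ^ 2) (α β : ℝ) :
    ∫ x in α..β, 1 / (ε + a * x ^ 2) ^ 2 =
      (ε ^ 2 * c)⁻¹ * ∫ t in c * α..c * β, 1 / (1 + t ^ 2) ^ 2 := by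
  have hscale (x : ℝ) : 1 / (ε + a * x ^ 2) ^ 2 = (ε ^ 2)⁻¹ * (1 / (1 + (c * x) ^ 2) ^ 2) := by
    rw [hac, show ε + ε * c ^ 2 * x ^ 2 = ε * (1 + (c * x) ^ 2) by ring, mul_pow, one_div,
      one_div, mul_inv]
  simp_rw [hscale, intervalIntegral.integral_const_mul,
    intervalIntegral.integral_comp_mul_left (fun t => 1 / (1 + t ^ 2) ^ 2) hc, smul_eq_mul,
    mul_inv]
  ring

theorem stmt_3 (a R : ℝ) (ha : 0 < a) (hR : 0 < R) :
    ∃ C > 0, ∀ ε : ℝ, 0 < ε → ε < 1 →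
      |(∫ x in (-R)..R, 1 / (ε + a * x ^ 2) ^ 2) -
          Real.pi / (2 * Real.sqrt a * ε ^ ((3 : ℝ) / 2))| ≤ C / Real.sqrt ε := by
  refine ⟨2 / (3 * (a ^ 2 * R ^ 3)), by positivity, fun ε hε hε1 => ?_⟩
  obtain ⟨c, hc, hac, hpow⟩ : ∃ c > 0, a = ε * c ^ 2 ∧
      2 * √a * ε ^ ((3 : ℝ) / 2) = 2 * (ε ^ 2 * c) := by
    refine ⟨√a / √ε, by positivity, ?_, ?_⟩
    · rw [div_pow, sq_sqrt ha.le, sq_sqrt hε.le]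
      field_simp
    · rw [show (3 : ℝ) / 2 = 1 + 1 / 2 by norm_num, rpow_add hε, rpow_one, ← sqrt_eq_rpow]
      field_simp
      exact sq_sqrt hε.le
  have hu : 0 < (c * R)⁻¹ := by positivity
  have hint : ∫ x in (-R)..R, 1 / (ε + a * x ^ 2) ^ 2 =
      (ε ^ 2 * c)⁻¹ * (π / 2 - (arctan (c * R)⁻¹ - (c * R)⁻¹ / (1 + (c * R)⁻¹ ^ 2))) := by
    rw [integral_one_div_add_mul_sq_sq hc.ne' hac, integral_one_div_one_add_sq_sq, mul_neg,
      arctan_neg, arctan_inv_of_pos (by positivity)]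
    field_simp
    ring
  rw [hint, hpow]
  set u := (c * R)⁻¹ with hu_def
  calc |(ε ^ 2 * c)⁻¹ * (π / 2 - (arctan u - u / (1 + u ^ 2))) - π / (2 * (ε ^ 2 * c))|
      = (ε ^ 2 * c)⁻¹ * (arctan u - u / (1 + u ^ 2)) := by
        rw [← abs_neg, ← abs_of_nonneg (mul_nonneg (by positivity)
          (arctan_sub_div_one_add_sq_nonneg hu.le))]
        ring_nf
    _ ≤ (ε ^ 2 * c)⁻¹ * (2 * u ^ 3 / 3) := by
        gcongr
        exact arctan_sub_div_one_add_sq_le hu.le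
    _ = 2 / (3 * (a ^ 2 * R ^ 3)) := by
        rw [hu_def, hac]
        field_simp
    _ ≤ 2 / (3 * (a ^ 2 * R ^ 3)) / √ε :=
        le_div_self (by positivity) (sqrt_pos.2 hε) (sqrt_le_one.2 hε1.le)
end

section
/- Let a > 0 and R > 0. There exists a constant C > 0, depending only on a and R, such that for all 0 < ε < 1, |∫_{−R}^{R} x⁴/(ε + a x²)³ dx − 3π/(8 a^{5/2} √ε)| ≤ C. -/
/-!
The integrand has an elementary antiderivative `F = quarticDivCubeAntideriv` (reduction formula),
and `F` is odd, so the integral equals `2 F(R)`. The arctan part of `2 F(R)` differs from the main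
term `3π / (8 a^{5/2} √ε)` by its prefactor times `π/2 - arctan (R √(a/ε)) ≤ √ε / (R √a)`, which
absorbs the singular `1 / √ε`; the two rational parts are at most `1 / (a R)` uniformly in `ε`.
-/

open Real

namespace Real

lemma arctan_le_self {x : ℝ} (hx : 0 ≤ x) : arctan x ≤ x := by
  simpa using le_tan (arctan_nonneg.2 hx) (arctan_lt_pi_div_two x)

lemma pi_div_two_sub_arctan_le_inv {x : ℝ} (hx : 0 < x) : π / 2 - arctan x ≤ x⁻¹ := by
  rw [← arctan_inv_of_pos hx]
  exact arctan_le_self (inv_nonneg.2 hx.le)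

end Real

noncomputable def quarticDivCubeAntideriv (a ε x : ℝ) : ℝ :=
  3 / (8 * a ^ 2 * √a * √ε) * arctan (√a * x / √ε) - 5 / (8 * a ^ 2) * (x / (ε + a * x ^ 2))
    + ε / (4 * a ^ 2) * (x / (ε + a * x ^ 2) ^ 2)

lemma hasDerivAt_quarticDivCubeAntideriv {a ε : ℝ} (ha : 0 < a) (hε : 0 < ε) (x : ℝ) :
    HasDerivAt (quarticDivCubeAntideriv a ε) (x ^ 4 / (ε + a * x ^ 2) ^ 3) x := by
  have hD : 0 < ε + a * x ^ 2 := by positivity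
  have hden : HasDerivAt (fun y ↦ ε + a * y ^ 2) (a * (2 * x)) x := by
    simpa using ((hasDerivAt_pow 2 x).const_mul a).const_add ε
  have harg : HasDerivAt (fun y ↦ √a * y / √ε) (√a / √ε) x := by
    simpa using ((hasDerivAt_id x).const_mul √a).div_const √ε
  have hsa2 : √a ^ 2 = a := sq_sqrt ha.le
  have hse2 : √ε ^ 2 = ε := sq_sqrt hε.le
  refine ((((harg.arctan).const_mul (3 / (8 * a ^ 2 * √a * √ε))).sub
      (((hasDerivAt_id x).div hden hD.ne').const_mul (5 / (8 * a ^ 2)))).add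
    (((hasDerivAt_id x).div (hden.pow 2) (pow_ne_zero 2 hD.ne')).const_mul
      (ε / (4 * a ^ 2)))).congr_deriv ?_
  simp only [id, Pi.pow_apply]
  field_simp
  rw [hsa2, hse2]
  norm_num
  ring

lemma quarticDivCubeAntideriv_neg (a ε x : ℝ) :
    quarticDivCubeAntideriv a ε (-x) = -quarticDivCubeAntideriv a ε x := by
  simp only [quarticDivCubeAntideriv, mul_neg, neg_div, arctan_neg, neg_sq]
  ring

lemma integral_pow_four_div_add_mul_sq_cube {a ε : ℝ} (ha : 0 < a) (hε : 0 < ε) (R : ℝ) :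
    ∫ x in (-R)..R, x ^ 4 / (ε + a * x ^ 2) ^ 3 = 2 * quarticDivCubeAntideriv a ε R := by
  have hcont : Continuous fun x : ℝ ↦ x ^ 4 / (ε + a * x ^ 2) ^ 3 :=
    (continuous_pow 4).div (by fun_prop) fun x ↦ by positivity
  rw [intervalIntegral.integral_eq_sub_of_hasDerivAt
    (fun x _ ↦ hasDerivAt_quarticDivCubeAntideriv ha hε x) (hcont.intervalIntegrable _ _),
    quarticDivCubeAntideriv_neg]
  ring

lemma two_mul_quarticDivCubeAntideriv_sub (a ε R : ℝ) :
    2 * quarticDivCubeAntideriv a ε R - 3 * π / (8 * (a ^ 2 * √a) * √ε) =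
      (2 * (ε * R / (ε + a * R ^ 2) ^ 2) - 3 * ((π / 2 - arctan (√a * R / √ε)) / (√a * √ε))
        - 5 * (R / (ε + a * R ^ 2))) / (4 * a ^ 2) := by
  unfold quarticDivCubeAntideriv
  ring

lemma pi_div_two_sub_arctan_div_le {a ε R : ℝ} (ha : 0 < a) (hε : 0 < ε) (hR : 0 < R) :
    (π / 2 - arctan (√a * R / √ε)) / (√a * √ε) ≤ 1 / (a * R) := by
  calc (π / 2 - arctan (√a * R / √ε)) / (√a * √ε)
      ≤ (√a * R / √ε)⁻¹ / (√a * √ε) := by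
        gcongr
        exact pi_div_two_sub_arctan_le_inv (by positivity)
    _ = 1 / (√a ^ 2 * R) := by field_simp
    _ = 1 / (a * R) := by rw [sq_sqrt ha.le]

lemma div_add_mul_sq_le {a ε R : ℝ} (ha : 0 < a) (hε : 0 ≤ ε) (hR : 0 < R) :
    R / (ε + a * R ^ 2) ≤ 1 / (a * R) := by
  rw [div_le_div_iff₀ (by positivity) (by positivity)]
  nlinarith

lemma mul_div_add_mul_sq_sq_le {a ε R : ℝ} (ha : 0 < a) (hε : 0 ≤ ε) (hR : 0 < R) :
    ε * R / (ε + a * R ^ 2) ^ 2 ≤ 1 / (a * R) := by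
  calc ε * R / (ε + a * R ^ 2) ^ 2 ≤ (ε + a * R ^ 2) * R / (ε + a * R ^ 2) ^ 2 := by
        gcongr
        nlinarith
    _ = R / (ε + a * R ^ 2) := by field_simp
    _ ≤ 1 / (a * R) := div_add_mul_sq_le ha hε hR

lemma rpow_five_div_two {a : ℝ} (ha : 0 ≤ a) : a ^ ((5 : ℝ) / 2) = a ^ 2 * √a := by
  rw [show (5 : ℝ) / 2 = (2 : ℕ) + 1 / 2 by norm_num, rpow_add' ha (by norm_num),
    rpow_natCast, sqrt_eq_rpow]

theorem stmt_5 (a R : ℝ) (ha : 0 < a) (hR : 0 < R) :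
    ∃ C > 0, ∀ ε : ℝ, 0 < ε → ε < 1 →
      |(∫ x in (-R)..R, x ^ 4 / (ε + a * x ^ 2) ^ 3) -
          3 * Real.pi / (8 * a ^ ((5 : ℝ) / 2) * Real.sqrt ε)| ≤ C := by
  refine ⟨5 / (2 * a ^ 3 * R), by positivity, fun ε hε _ ↦ ?_⟩
  have hT₀ : 0 ≤ (π / 2 - arctan (√a * R / √ε)) / (√a * √ε) :=
    div_nonneg (sub_nonneg.2 (arctan_lt_pi_div_two _).le) (by positivity)
  have hT := pi_div_two_sub_arctan_div_le ha hε hR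
  have hU := div_add_mul_sq_le ha hε.le hR
  have hV := mul_div_add_mul_sq_sq_le ha hε.le hR
  have hU₀ : 0 ≤ R / (ε + a * R ^ 2) := by positivity
  have hV₀ : 0 ≤ ε * R / (ε + a * R ^ 2) ^ 2 := by positivity
  rw [integral_pow_four_div_add_mul_sq_cube ha hε, rpow_five_div_two ha.le,
    two_mul_quarticDivCubeAntideriv_sub, abs_div, abs_of_pos (by positivity : (0 : ℝ) < 4 * a ^ 2),
    div_le_iff₀ (by positivity)]
  calc _ ≤ 10 * (1 / (a * R)) := abs_le.2 ⟨by linarith, by linarith⟩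
    _ = 5 / (2 * a ^ 3 * R) * (4 * a ^ 2) := by field_simp; ring
end

section
/- Let ε > 0, κ₁ > κ > 0, δ(x₁) = ε + (κ₁−κ)x₁², and k(x) = (x₂ − κx₁²)/δ(x₁) − 1/2. Define v₂(x) = ( (6x₁/δ(x₁))(k(x)²−1/4), (k(x)+1/2) + G₂(x)(k(x)²−1/4) ), where G₂(x) = −2k(x) + (6x₁/δ(x₁))((κ₁+κ)x₁ + 2(κ₁−κ)x₁ k(x)). Then ∂_{x₁} v₂^{(1)} + ∂_{x₂} v₂^{(2)} = 0 everywhere. -/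
/-!
With `q = k + 1/2 = (x₂ - κ x₁²) / δ(x₁)`, the field `v₂` is the skew gradient `(∂₂ψ, -∂₁ψ)` of the
stream function `ψ = x₁ q² (2q - 3)`. Since `δ > 0`, `ψ` is smooth, so the divergence
`∂₁∂₂ψ - ∂₂∂₁ψ` vanishes by the symmetry of second derivatives.
-/

section MixedPartials

variable {F : Type*} [NormedAddCommGroup F] [NormedSpace ℝ F] {f : ℝ × ℝ → F} {x y : ℝ}

theorem DifferentiableAt.hasDerivAt_slice_fst (hf : DifferentiableAt ℝ f (x, y)) :
    HasDerivAt (fun t => f (t, y)) (fderiv ℝ f (x, y) (1, 0)) x :=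
  hf.hasFDerivAt.comp_hasDerivAt x ((hasDerivAt_id x).prodMk (hasDerivAt_const x y))

theorem DifferentiableAt.hasDerivAt_slice_snd (hf : DifferentiableAt ℝ f (x, y)) :
    HasDerivAt (fun s => f (x, s)) (fderiv ℝ f (x, y) (0, 1)) y :=
  hf.hasFDerivAt.comp_hasDerivAt y ((hasDerivAt_const y x).prodMk (hasDerivAt_id y))

theorem ContDiff.deriv_deriv_slice_comm (hf : ContDiff ℝ 2 f) (x y : ℝ) :
    deriv (fun t => deriv (fun s => f (t, s)) y) x =
      deriv (fun s => deriv (fun t => f (t, s)) x) y := by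
  have hdf : ∀ p, DifferentiableAt ℝ f p := hf.differentiable two_ne_zero
  have hd2f : DifferentiableAt ℝ (fderiv ℝ f) (x, y) :=
    (hf.fderiv_right (m := 1) (by norm_num)).differentiable one_ne_zero _
  simp_rw [fun t s => (hdf (t, s)).hasDerivAt_slice_snd.deriv,
    fun t s => (hdf (t, s)).hasDerivAt_slice_fst.deriv]
  have h₁ : HasDerivAt (fun t => fderiv ℝ f (t, y) (0, 1))
      (fderiv ℝ (fderiv ℝ f) (x, y) (1, 0) (0, 1)) x := by
    simpa using hd2f.hasDerivAt_slice_fst.clm_apply (hasDerivAt_const x _)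
  have h₂ : HasDerivAt (fun s => fderiv ℝ f (x, s) (1, 0))
      (fderiv ℝ (fderiv ℝ f) (x, y) (0, 1) (1, 0)) y := by
    simpa using hd2f.hasDerivAt_slice_snd.clm_apply (hasDerivAt_const y _)
  rw [h₁.deriv, h₂.deriv]
  exact hf.contDiffAt.isSymmSndFDerivAt (by simp) _ _

theorem deriv_add_deriv_eq_zero_of_streamFunction {ψ : ℝ × ℝ → F} (hψ : ContDiff ℝ 2 ψ)
    {u v : ℝ → ℝ → F} (hu : ∀ t s, u t s = deriv (fun s => ψ (t, s)) s)
    (hv : ∀ t s, v t s = -deriv (fun t => ψ (t, s)) t) (x y : ℝ) :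
    deriv (fun t => u t y) x + deriv (fun s => v x s) y = 0 := by
  simp_rw [hu, hv, deriv.fun_neg, hψ.deriv_deriv_slice_comm, add_neg_cancel]

end MixedPartials

noncomputable def parabolicHeight (ε κ κ₁ x₁ x₂ : ℝ) : ℝ :=
  (x₂ - κ * x₁ ^ 2) / (ε + (κ₁ - κ) * x₁ ^ 2)

noncomputable def streamFunction (ε κ κ₁ : ℝ) (p : ℝ × ℝ) : ℝ :=
  p.1 * parabolicHeight ε κ κ₁ p.1 p.2 ^ 2 * (2 * parabolicHeight ε κ κ₁ p.1 p.2 - 3)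

section StreamFunction

variable {ε κ κ₁ x₁ x₂ : ℝ}

local notation "q" => parabolicHeight ε κ κ₁

theorem hasDerivAt_parabolicHeight_snd :
    HasDerivAt (q x₁) (1 / (ε + (κ₁ - κ) * x₁ ^ 2)) x₂ :=
  ((hasDerivAt_id x₂).sub_const (κ * x₁ ^ 2)).div_const (ε + (κ₁ - κ) * x₁ ^ 2)

theorem hasDerivAt_parabolicHeight_fst (hδ : ε + (κ₁ - κ) * x₁ ^ 2 ≠ 0) :
    HasDerivAt (fun t => q t x₂)
      (-2 * x₁ * (κ + (κ₁ - κ) * q x₁ x₂) / (ε + (κ₁ - κ) * x₁ ^ 2)) x₁ := by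
  have h := (((hasDerivAt_pow 2 x₁).const_mul κ).const_sub x₂).div
    (((hasDerivAt_pow 2 x₁).const_mul (κ₁ - κ)).const_add ε) hδ
  refine h.congr_deriv ?_
  unfold parabolicHeight
  field_simp
  ring

theorem deriv_streamFunction_snd :
    deriv (fun s => streamFunction ε κ κ₁ (x₁, s)) x₂ =
      6 * x₁ * q x₁ x₂ * (q x₁ x₂ - 1) / (ε + (κ₁ - κ) * x₁ ^ 2) := by
  have hq : HasDerivAt (q x₁) _ x₂ := hasDerivAt_parabolicHeight_snd
  refine (((hq.fun_pow 2).const_mul x₁).fun_mul ((hq.const_mul 2).sub_const 3)).deriv.trans ?_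
  simp only [Nat.cast_ofNat]
  ring

theorem deriv_streamFunction_fst (hδ : ε + (κ₁ - κ) * x₁ ^ 2 ≠ 0) :
    deriv (fun t => streamFunction ε κ κ₁ (t, x₂)) x₁ =
      q x₁ x₂ ^ 2 * (2 * q x₁ x₂ - 3) -
        12 * x₁ ^ 2 * q x₁ x₂ * (q x₁ x₂ - 1) * (κ + (κ₁ - κ) * q x₁ x₂) /
          (ε + (κ₁ - κ) * x₁ ^ 2) := by
  have hq := hasDerivAt_parabolicHeight_fst (x₂ := x₂) hδ
  refine (((hasDerivAt_id x₁).fun_mul (hq.fun_pow 2)).fun_mul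
    ((hq.const_mul 2).sub_const 3)).deriv.trans ?_
  simp only [id, Nat.cast_ofNat]
  field_simp
  ring

theorem contDiff_streamFunction (hδ : ∀ t, ε + (κ₁ - κ) * t ^ 2 ≠ 0) :
    ContDiff ℝ 2 (streamFunction ε κ κ₁) := by
  unfold streamFunction parabolicHeight
  fun_prop (disch := exact fun p => hδ p.1)

end StreamFunction

theorem stmt_13_general (ε κ κ₁ : ℝ) (hε : 0 < ε) (hκ₁ : κ < κ₁)
    (δ : ℝ → ℝ) (hδ : ∀ x₁, δ x₁ = ε + (κ₁ - κ) * x₁ ^ 2)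
    (k : ℝ → ℝ → ℝ) (hk : ∀ x₁ x₂, k x₁ x₂ = (x₂ - κ * x₁ ^ 2) / δ x₁ - 1 / 2)
    (G₂ : ℝ → ℝ → ℝ)
    (hG₂ : ∀ x₁ x₂, G₂ x₁ x₂ =
      -2 * k x₁ x₂ +
        6 * x₁ / δ x₁ * ((κ₁ + κ) * x₁ + 2 * (κ₁ - κ) * x₁ * k x₁ x₂))
    (v₂fst v₂snd : ℝ → ℝ → ℝ)
    (hv₂fst : ∀ x₁ x₂, v₂fst x₁ x₂ = 6 * x₁ / δ x₁ * (k x₁ x₂ ^ 2 - 1 / 4))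
    (hv₂snd : ∀ x₁ x₂, v₂snd x₁ x₂ =
      (k x₁ x₂ + 1 / 2) + G₂ x₁ x₂ * (k x₁ x₂ ^ 2 - 1 / 4)) :
    ∀ x₁ x₂ : ℝ,
      deriv (fun t => v₂fst t x₂) x₁ + deriv (fun s => v₂snd x₁ s) x₂ = 0 := by
  have hδ_ne : ∀ t, ε + (κ₁ - κ) * t ^ 2 ≠ 0 := fun t => by
    have := sub_pos.2 hκ₁
    positivity
  have hk_eq : ∀ t s, k t s = parabolicHeight ε κ κ₁ t s - 1 / 2 := fun t s => by
    rw [hk, hδ, parabolicHeight]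
  refine deriv_add_deriv_eq_zero_of_streamFunction (contDiff_streamFunction hδ_ne)
    (fun t s => ?_) (fun t s => ?_)
  · rw [hv₂fst, hδ, hk_eq, deriv_streamFunction_snd]
    field_simp
    ring
  · rw [hv₂snd, hG₂, hδ, hk_eq, deriv_streamFunction_fst (hδ_ne t)]
    field_simp
    ring

theorem stmt_13 (ε κ κ₁ : ℝ) (hε : 0 < ε) (hκ : 0 < κ) (hκ₁ : κ < κ₁)
    (δ : ℝ → ℝ) (hδ : ∀ x₁, δ x₁ = ε + (κ₁ - κ) * x₁ ^ 2)
    (k : ℝ → ℝ → ℝ) (hk : ∀ x₁ x₂, k x₁ x₂ = (x₂ - κ * x₁ ^ 2) / δ x₁ - 1 / 2)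
    (G₂ : ℝ → ℝ → ℝ)
    (hG₂ : ∀ x₁ x₂, G₂ x₁ x₂ =
      -2 * k x₁ x₂ +
        6 * x₁ / δ x₁ * ((κ₁ + κ) * x₁ + 2 * (κ₁ - κ) * x₁ * k x₁ x₂))
    (v₂fst v₂snd : ℝ → ℝ → ℝ)
    (hv₂fst : ∀ x₁ x₂, v₂fst x₁ x₂ = 6 * x₁ / δ x₁ * (k x₁ x₂ ^ 2 - 1 / 4))
    (hv₂snd : ∀ x₁ x₂, v₂snd x₁ x₂ =
      (k x₁ x₂ + 1 / 2) + G₂ x₁ x₂ * (k x₁ x₂ ^ 2 - 1 / 4)) :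
    ∀ x₁ x₂ : ℝ,
      deriv (fun t => v₂fst t x₂) x₁ + deriv (fun s => v₂snd x₁ s) x₂ = 0 :=
  stmt_13_general ε κ κ₁ hε hκ₁ δ hδ k hk G₂ hG₂ v₂fst v₂snd hv₂fst hv₂snd
end

section
/- Let A = (a_{αβ}) be a real symmetric 3×3 matrix depending on ε ∈ (0,1) satisfying the asymptotics a₁₁ = c₁ε^{−1/2}+O(1), a₂₂ = c₂ε^{−3/2}+O(ε^{−1/2}), a₃₃ = c₃ε^{−1/2}+O(1), a₁₃ = c₄ε^{−1/2}+O(1), |a₁₂|,|a₂₃| ≤ K|ln ε|, with c₁,c₂,c₃ > 0 and c₁c₃ − c₄² > 0. Let b = (b₁,b₂,b₃)ᵀ with |b₁|,|b₂|,|b₃| ≤ K. Then for sufficiently small ε, the solution x of Ax = b satisfies |x₁| ≤ C√ε, |x₂| ≤ Cε^{3/2}, |x₃| ≤ C√ε, where C depends only on c₁,c₂,c₃,c₄,K. -/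
private lemma quad_lower (c₁ c₃ c₄ : ℝ) (h1 : 0 < c₁) (h3 : 0 < c₃)
    (h : c₄ ^ 2 < c₁ * c₃) (u w : ℝ) :
    (c₁ * c₃ - c₄ ^ 2) / (c₁ + c₃) * (u ^ 2 + w ^ 2) ≤
      c₁ * u ^ 2 + 2 * c₄ * u * w + c₃ * w ^ 2 := by
  have h13 : 0 < c₁ + c₃ := by linarith
  rw [div_mul_eq_mul_div, div_le_iff₀ h13]
  nlinarith [sq_nonneg (c₁ * u + c₄ * w), sq_nonneg (c₄ * u + c₃ * w)]

private lemma block_bound (K s δ c₁ c₃ c₄ α γ d u w : ℝ)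
    (hK : 0 < K) (hs : 0 ≤ s)
    (hα : c₁ - K * s ≤ α) (hγ : c₃ - K * s ≤ γ)
    (hd1 : -(K * s) ≤ d - c₄) (hd2 : d - c₄ ≤ K * s)
    (hql : δ * (u ^ 2 + w ^ 2) ≤ c₁ * u ^ 2 + 2 * c₄ * u * w + c₃ * w ^ 2) :
    (δ - 2 * K * s) * (u ^ 2 + w ^ 2) ≤ α * u ^ 2 + 2 * d * u * w + γ * w ^ 2 := by
  nlinarith [mul_nonneg (by linarith : (0:ℝ) ≤ K * s - (d - c₄)) (sq_nonneg (u - w)),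
    mul_nonneg (by linarith : (0:ℝ) ≤ K * s + (d - c₄)) (sq_nonneg (u + w)),
    mul_nonneg (by linarith : (0:ℝ) ≤ α - (c₁ - K * s)) (sq_nonneg u),
    mul_nonneg (by linarith : (0:ℝ) ≤ γ - (c₃ - K * s)) (sq_nonneg w),
    sq_nonneg u, sq_nonneg w]

private lemma cross_bound (K s p u v : ℝ) (hs : 0 ≤ s)
    (hp1 : -(2 * K) ≤ p) (hp2 : p ≤ 2 * K) :
    -(2 * K * s ^ 3 * u ^ 2 + 2 * K * s * v ^ 2) ≤ 2 * s ^ 2 * (p * u * v) := by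
  nlinarith [mul_nonneg (mul_nonneg (by linarith : (0:ℝ) ≤ 2 * K - p) hs) (sq_nonneg (s * u - v)),
    mul_nonneg (mul_nonneg (by linarith : (0:ℝ) ≤ 2 * K + p) hs) (sq_nonneg (s * u + v))]

private lemma core_est (K s δ c₁ c₂ c₃ c₄ m α β γ d p q u v w : ℝ)
    (hK : 0 < K) (hs : 0 < s) (hs1 : s ≤ 1)
    (hm : 0 < m) (hmδ : m ≤ δ) (hmc₂ : m ≤ c₂)
    (hsδ : 8 * K * s ≤ δ) (hsc₂ : 10 * K * s ≤ c₂)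
    (hα : c₁ - K * s ≤ α) (hγ : c₃ - K * s ≤ γ)
    (hβ : c₂ - K * s ^ 2 ≤ β)
    (hd1 : -(K * s) ≤ d - c₄) (hd2 : d - c₄ ≤ K * s)
    (hp1 : -(2 * K) ≤ p) (hp2 : p ≤ 2 * K)
    (hq1 : -(2 * K) ≤ q) (hq2 : q ≤ 2 * K)
    (hql : δ * (u ^ 2 + w ^ 2) ≤ c₁ * u ^ 2 + 2 * c₄ * u * w + c₃ * w ^ 2) :
    m / 2 * (s ^ 2 * u ^ 2 + v ^ 2 + s ^ 2 * w ^ 2) ≤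
      s ^ 2 * (α * u ^ 2 + 2 * d * u * w + γ * w ^ 2) + β * v ^ 2
        + 2 * s ^ 2 * (p * u * v) + 2 * s ^ 2 * (q * v * w) := by
  have hB := block_bound K s δ c₁ c₃ c₄ α γ d u w hK hs.le hα hγ hd1 hd2 hql
  have hB2 : s ^ 2 * ((δ - 2 * K * s) * (u ^ 2 + w ^ 2)) ≤
      s ^ 2 * (α * u ^ 2 + 2 * d * u * w + γ * w ^ 2) :=
    mul_le_mul_of_nonneg_left hB (by positivity)
  have hc1 := cross_bound K s p u v hs.le hp1 hp2
  have hc2 := cross_bound K s q w v hs.le hq1 hq2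
  have hβ2 : (c₂ - K * s ^ 2) * v ^ 2 ≤ β * v ^ 2 :=
    mul_le_mul_of_nonneg_right hβ (sq_nonneg v)
  have hKs2 : K * s ^ 2 ≤ K * s := by nlinarith
  have e1 : (0:ℝ) ≤ (δ - 4 * K * s - m / 2) * (s ^ 2 * u ^ 2) :=
    mul_nonneg (by linarith) (by positivity)
  have e2 : (0:ℝ) ≤ (δ - 4 * K * s - m / 2) * (s ^ 2 * w ^ 2) :=
    mul_nonneg (by linarith) (by positivity)
  have e3 : (0:ℝ) ≤ (c₂ - K * s ^ 2 - 4 * K * s - m / 2) * v ^ 2 :=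
    mul_nonneg (by linarith) (sq_nonneg v)
  nlinarith [hB2, hc1, hc2, hβ2, e1, e2, e3]

private lemma key_est (K m s au av aw : ℝ) (hK : 0 < K) (hm : 0 < m)
    (hs : 0 < s) (hs1 : s ≤ 1)
    (hQm : m * (m / 2 * (s ^ 2 * au ^ 2 + av ^ 2 + s ^ 2 * aw ^ 2)) ≤
      m * (K * s ^ 3 * (au + av + aw))) :
    m ^ 2 * (s ^ 2 * au ^ 2 + av ^ 2 + s ^ 2 * aw ^ 2) ≤ 36 * K ^ 2 * s ^ 4 := by
  have h46 : (0:ℝ) ≤ K ^ 2 * (s ^ 4 - s ^ 6) := by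
    have h1 : (0:ℝ) ≤ 1 - s ^ 2 := by nlinarith
    have h2 := mul_nonneg (mul_nonneg (sq_nonneg K) (by positivity : (0:ℝ) ≤ s ^ 4)) h1
    nlinarith [h2]
  nlinarith [sq_nonneg (m * s * au - 6 * K * s ^ 2), sq_nonneg (m * av - 6 * K * s ^ 3),
    sq_nonneg (m * s * aw - 6 * K * s ^ 2), h46,
    mul_nonneg (sq_nonneg K) (by positivity : (0:ℝ) ≤ s ^ 4)]

set_option maxHeartbeats 1000000 in
theorem stmt_17 (c₁ c₂ c₃ c₄ K : ℝ)
    (hc₁ : 0 < c₁) (hc₂ : 0 < c₂) (hc₃ : 0 < c₃) (hK : 0 < K)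
    (hdet : c₄ ^ 2 < c₁ * c₃)
    (A : ℝ → Matrix (Fin 3) (Fin 3) ℝ) (b : Fin 3 → ℝ)
    (hsymm : ∀ ε ∈ Set.Ioo (0 : ℝ) 1, (A ε).IsSymm)
    (h11 : ∀ ε ∈ Set.Ioo (0 : ℝ) 1, |A ε 0 0 - c₁ * ε ^ (-(1 : ℝ) / 2)| ≤ K)
    (h22 : ∀ ε ∈ Set.Ioo (0 : ℝ) 1,
      |A ε 1 1 - c₂ * ε ^ (-(3 : ℝ) / 2)| ≤ K * ε ^ (-(1 : ℝ) / 2))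
    (h33 : ∀ ε ∈ Set.Ioo (0 : ℝ) 1, |A ε 2 2 - c₃ * ε ^ (-(1 : ℝ) / 2)| ≤ K)
    (h13 : ∀ ε ∈ Set.Ioo (0 : ℝ) 1, |A ε 0 2 - c₄ * ε ^ (-(1 : ℝ) / 2)| ≤ K)
    (h12 : ∀ ε ∈ Set.Ioo (0 : ℝ) 1, |A ε 0 1| ≤ K * |Real.log ε|)
    (h23 : ∀ ε ∈ Set.Ioo (0 : ℝ) 1, |A ε 1 2| ≤ K * |Real.log ε|)
    (hb : ∀ i : Fin 3, |b i| ≤ K) :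
    ∃ ε₀ > 0, ∃ C > 0, ∀ ε : ℝ, 0 < ε → ε < ε₀ →
      ∀ x : Fin 3 → ℝ, (A ε).mulVec x = b →
        |x 0| ≤ C * Real.sqrt ε ∧
        |x 1| ≤ C * ε ^ ((3 : ℝ) / 2) ∧
        |x 2| ≤ C * Real.sqrt ε := by
  have hc13 : 0 < c₁ + c₃ := by linarith
  set δ : ℝ := (c₁ * c₃ - c₄ ^ 2) / (c₁ + c₃) with hδdef
  have hδ : 0 < δ := div_pos (by linarith) hc13
  set m : ℝ := min δ c₂ with hmdef
  have hm : 0 < m := lt_min hδ hc₂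
  have hmδ : m ≤ δ := min_le_left _ _
  have hmc₂ : m ≤ c₂ := min_le_right _ _
  set s₀ : ℝ := min 1 (min (δ / (8 * K)) (c₂ / (10 * K))) with hs₀def
  have hs₀ : 0 < s₀ := lt_min one_pos
    (lt_min (div_pos hδ (by linarith)) (div_pos hc₂ (by linarith)))
  refine ⟨s₀ ^ 2, by positivity, ?_⟩
  set C₀ : ℝ := 6 * K / m with hC₀def
  have hC₀ : 0 < C₀ := by positivity
  set C : ℝ := max C₀ (2 * (K + 4 * K * C₀) / c₂) with hCdef
  have hC : 0 < C := lt_of_lt_of_le hC₀ (le_max_left _ _)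
  have hCb : 2 * (K + 4 * K * C₀) / c₂ ≤ C := le_max_right _ _
  have hC₀C : C₀ ≤ C := le_max_left _ _
  refine ⟨C, hC, ?_⟩
  intro ε hε hεlt x hx
  set s := Real.sqrt ε with hsdef
  have hs0 : 0 < s := Real.sqrt_pos.mpr hε
  have hεs : ε = s ^ 2 := (Real.sq_sqrt hε.le).symm
  have hs₀1 : s₀ ≤ 1 := min_le_left _ _
  have hε1 : ε < 1 := by
    have h2 : s₀ * s₀ ≤ 1 * 1 := mul_le_mul hs₀1 hs₀1 hs₀.le zero_le_one
    have h3 : s₀ ^ 2 = s₀ * s₀ := sq s₀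
    linarith
  have hεmem : ε ∈ Set.Ioo (0:ℝ) 1 := ⟨hε, hε1⟩
  have hss₀ : s < s₀ := by
    have := Real.sqrt_lt_sqrt (by positivity) hεlt
    rwa [Real.sqrt_sq hs₀.le] at this
  have hs1 : s < 1 := lt_of_lt_of_le hss₀ hs₀1
  have hsδ : 8 * K * s ≤ δ := by
    have h1 : s ≤ δ / (8 * K) :=
      hss₀.le.trans ((min_le_right _ _).trans (min_le_left _ _))
    rw [le_div_iff₀ (by positivity)] at h1; linarith
  have hsc₂ : 10 * K * s ≤ c₂ := by
    have h1 : s ≤ c₂ / (10 * K) :=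
      hss₀.le.trans ((min_le_right _ _).trans (min_le_right _ _))
    rw [le_div_iff₀ (by positivity)] at h1; linarith
  -- rpow conversions
  have hr1 : ε ^ (-(1:ℝ)/2) = s⁻¹ := by
    rw [show (-(1:ℝ)/2) = -(1/2) by ring, Real.rpow_neg hε.le, ← Real.sqrt_eq_rpow]
  have hr3 : ε ^ (-(3:ℝ)/2) = (s^3)⁻¹ := by
    rw [show (-(3:ℝ)/2) = -(1/2*3) by ring, Real.rpow_neg hε.le, Real.rpow_mul hε.le,
      ← Real.sqrt_eq_rpow, show (3:ℝ) = ((3:ℕ):ℝ) by norm_num, Real.rpow_natCast]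
  have hr32 : ε ^ ((3:ℝ)/2) = s^3 := by
    rw [show ((3:ℝ)/2) = (1/2*3) by ring, Real.rpow_mul hε.le,
      ← Real.sqrt_eq_rpow, show (3:ℝ) = ((3:ℕ):ℝ) by norm_num, Real.rpow_natCast]
  -- log bound : s * |log ε| ≤ 2
  have hlog : s * |Real.log ε| ≤ 2 := by
    have hlneg : Real.log ε < 0 := Real.log_neg hε hε1
    have h1 : Real.log ε = 2 * Real.log s := by
      rw [hεs, Real.log_pow]; norm_num
    have h2 : Real.log s⁻¹ ≤ s⁻¹ - 1 := Real.log_le_sub_one_of_pos (by positivity)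
    rw [Real.log_inv] at h2
    have h3 : |Real.log ε| = -(2 * Real.log s) := by rw [abs_of_neg hlneg, h1]
    rw [h3]
    have h4 : s * s⁻¹ = 1 := mul_inv_cancel₀ hs0.ne'
    have h5 := mul_le_mul_of_nonneg_left h2 hs0.le
    nlinarith [h5, h4, hs0.le]
  -- entries
  set u := x 0 with hu
  set v := x 1 with hv
  set w := x 2 with hw
  set a00 := A ε 0 0 with ha00
  set a11 := A ε 1 1 with ha11
  set a22 := A ε 2 2 with ha22
  set a01 := A ε 0 1 with ha01
  set a02 := A ε 0 2 with ha02
  set a12 := A ε 1 2 with ha12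
  have hsymmε := hsymm ε hεmem
  have hs10 : A ε 1 0 = a01 := hsymmε.apply 0 1
  have hs20 : A ε 2 0 = a02 := hsymmε.apply 0 2
  have hs21 : A ε 2 1 = a12 := hsymmε.apply 1 2
  -- scaled entry bounds
  have hα : c₁ - K * s ≤ s * a00 := by
    have h := (abs_le.mp (h11 ε hεmem)).1
    rw [hr1] at h
    have h2 : c₁ * s⁻¹ - K ≤ a00 := by linarith
    have h3 := mul_le_mul_of_nonneg_left h2 hs0.le
    have h4 : s * (c₁ * s⁻¹ - K) = c₁ - K * s := by field_simp
    linarith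
  have hγ : c₃ - K * s ≤ s * a22 := by
    have h := (abs_le.mp (h33 ε hεmem)).1
    rw [hr1] at h
    have h2 : c₃ * s⁻¹ - K ≤ a22 := by linarith
    have h3 := mul_le_mul_of_nonneg_left h2 hs0.le
    have h4 : s * (c₃ * s⁻¹ - K) = c₃ - K * s := by field_simp
    linarith
  have hβ : c₂ - K * s^2 ≤ s^3 * a11 := by
    have h := (abs_le.mp (h22 ε hεmem)).1
    rw [hr1, hr3] at h
    have h2 : c₂ * (s^3)⁻¹ - K * s⁻¹ ≤ a11 := by linarith
    have h3 := mul_le_mul_of_nonneg_left h2 (by positivity : (0:ℝ) ≤ s^3)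
    have h4 : s^3 * (c₂ * (s^3)⁻¹ - K * s⁻¹) = c₂ - K * s^2 := by field_simp
    linarith
  have hd := abs_le.mp (h13 ε hεmem)
  rw [hr1] at hd
  have hd1 : -(K * s) ≤ s * a02 - c₄ := by
    have h2 : c₄ * s⁻¹ - K ≤ a02 := by linarith [hd.1]
    have h3 := mul_le_mul_of_nonneg_left h2 hs0.le
    have h4 : s * (c₄ * s⁻¹ - K) = c₄ - K * s := by field_simp
    linarith
  have hd2 : s * a02 - c₄ ≤ K * s := by
    have h2 : a02 ≤ c₄ * s⁻¹ + K := by linarith [hd.2]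
    have h3 := mul_le_mul_of_nonneg_left h2 hs0.le
    have h4 : s * (c₄ * s⁻¹ + K) = c₄ + K * s := by field_simp
    linarith
  have hp : |s * a01| ≤ 2 * K := by
    rw [abs_mul, abs_of_pos hs0]
    calc s * |a01| ≤ s * (K * |Real.log ε|) :=
          mul_le_mul_of_nonneg_left (h12 ε hεmem) hs0.le
      _ = K * (s * |Real.log ε|) := by ring
      _ ≤ K * 2 := mul_le_mul_of_nonneg_left hlog hK.le
      _ = 2 * K := by ring
  have hq : |s * a12| ≤ 2 * K := by
    rw [abs_mul, abs_of_pos hs0]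
    calc s * |a12| ≤ s * (K * |Real.log ε|) :=
          mul_le_mul_of_nonneg_left (h23 ε hεmem) hs0.le
      _ = K * (s * |Real.log ε|) := by ring
      _ ≤ K * 2 := mul_le_mul_of_nonneg_left hlog hK.le
      _ = 2 * K := by ring
  have hp1 := (abs_le.mp hp).1
  have hp2 := (abs_le.mp hp).2
  have hq1 := (abs_le.mp hq).1
  have hq2 := (abs_le.mp hq).2
  -- equations
  have e0 : a00 * u + a01 * v + a02 * w = b 0 := by
    have := congrFun hx 0
    simpa [Matrix.mulVec, dotProduct, Fin.sum_univ_three] using this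
  have e1 : a01 * u + a11 * v + a12 * w = b 1 := by
    have := congrFun hx 1
    simpa [Matrix.mulVec, dotProduct, Fin.sum_univ_three, hs10] using this
  have e2 : a02 * u + a12 * v + a22 * w = b 2 := by
    have := congrFun hx 2
    simpa [Matrix.mulVec, dotProduct, Fin.sum_univ_three, hs20, hs21] using this
  have hb0 := hb 0
  have hb1 := hb 1
  have hb2 := hb 2
  clear_value u v w a00 a11 a22 a01 a02 a12 s δ m s₀ C₀ C
  clear hx hsymm h11 h22 h33 h13 h12 h23 hsymmε hs10 hs20 hs21 hd hb
  have hquad : u * b 0 + v * b 1 + w * b 2 =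
      a00 * u^2 + a11 * v^2 + a22 * w^2 + 2*a01*u*v + 2*a02*u*w + 2*a12*v*w := by
    linear_combination (-u) * e0 + (-v) * e1 + (-w) * e2
  have hql : δ * (u ^ 2 + w ^ 2) ≤ c₁ * u ^ 2 + 2 * c₄ * u * w + c₃ * w ^ 2 := by
    rw [hδdef]; exact quad_lower c₁ c₃ c₄ hc₁ hc₃ hdet u w
  have hid : s^3 * (u * b 0 + v * b 1 + w * b 2) =
      s^2 * ((s*a00)*u^2 + 2*(s*a02)*u*w + (s*a22)*w^2) + (s^3*a11)*v^2
        + 2*s^2*((s*a01)*u*v) + 2*s^2*((s*a12)*v*w) := by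
    linear_combination s^3 * hquad
  have hmain : m/2 * (s^2*u^2 + v^2 + s^2*w^2) ≤ s^3 * (u * b 0 + v * b 1 + w * b 2) := by
    rw [hid]
    exact core_est K s δ c₁ c₂ c₃ c₄ m (s*a00) (s^3*a11) (s*a22) (s*a02) (s*a01) (s*a12)
      u v w hK hs0 hs1.le hm hmδ hmc₂ hsδ hsc₂ hα hγ hβ hd1 hd2 hp1 hp2 hq1 hq2 hql
  -- upper bound
  have hub : s^3 * (u * b 0 + v * b 1 + w * b 2) ≤ K*s^3*(|u| + |v| + |w|) := by
    have h0 : u * b 0 ≤ |u| * K := by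
      calc u * b 0 ≤ |u * b 0| := le_abs_self _
        _ = |u| * |b 0| := abs_mul _ _
        _ ≤ |u| * K := mul_le_mul_of_nonneg_left hb0 (abs_nonneg u)
    have h1 : v * b 1 ≤ |v| * K := by
      calc v * b 1 ≤ |v * b 1| := le_abs_self _
        _ = |v| * |b 1| := abs_mul _ _
        _ ≤ |v| * K := mul_le_mul_of_nonneg_left hb1 (abs_nonneg v)
    have h2 : w * b 2 ≤ |w| * K := by
      calc w * b 2 ≤ |w * b 2| := le_abs_self _
        _ = |w| * |b 2| := abs_mul _ _
        _ ≤ |w| * K := mul_le_mul_of_nonneg_left hb2 (abs_nonneg w)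
    have hs3 : (0:ℝ) ≤ s^3 := by positivity
    linarith [mul_le_mul_of_nonneg_left h0 hs3, mul_le_mul_of_nonneg_left h1 hs3,
      mul_le_mul_of_nonneg_left h2 hs3]
  have hQ : m/2 * (s^2*u^2 + v^2 + s^2*w^2) ≤ K*s^3*(|u| + |v| + |w|) := hmain.trans hub
  have hQ' : m/2 * (s^2*|u|^2 + |v|^2 + s^2*|w|^2) ≤ K*s^3*(|u| + |v| + |w|) := by
    rwa [sq_abs, sq_abs, sq_abs]
  have hkey := key_est K m s |u| |v| |w| hK hm hs0 hs1.le
    (mul_le_mul_of_nonneg_left hQ' hm.le)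
  -- individual bounds
  have hsq : (C₀ * s)^2 = 36 * K^2 * s^2 / m^2 := by
    rw [hC₀def]; field_simp; ring
  have hm2 : (0:ℝ) < m^2 := by positivity
  have habs_u : |u| ≤ C₀ * s := by
    have h1 : m^2 * |u|^2 * s^2 ≤ 36 * K^2 * s^2 * s^2 := by
      linarith [hkey, mul_nonneg hm2.le (sq_nonneg |v|),
        mul_nonneg (mul_nonneg hm2.le (sq_nonneg |w|)) (sq_nonneg s)]
    have h2 : m^2 * |u|^2 ≤ 36 * K^2 * s^2 :=
      le_of_mul_le_mul_right (by linarith [h1]) (by positivity : (0:ℝ) < s^2)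
    have h3 : |u|^2 ≤ (C₀ * s)^2 := by
      rw [hsq, le_div_iff₀ hm2]; linarith
    calc |u| = Real.sqrt (|u|^2) := (Real.sqrt_sq (abs_nonneg u)).symm
      _ ≤ Real.sqrt ((C₀ * s)^2) := Real.sqrt_le_sqrt h3
      _ = C₀ * s := Real.sqrt_sq (by positivity)
  have habs_w : |w| ≤ C₀ * s := by
    have h1 : m^2 * |w|^2 * s^2 ≤ 36 * K^2 * s^2 * s^2 := by
      linarith [hkey, mul_nonneg hm2.le (sq_nonneg |v|),
        mul_nonneg (mul_nonneg hm2.le (sq_nonneg |u|)) (sq_nonneg s)]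
    have h2 : m^2 * |w|^2 ≤ 36 * K^2 * s^2 :=
      le_of_mul_le_mul_right (by linarith [h1]) (by positivity : (0:ℝ) < s^2)
    have h3 : |w|^2 ≤ (C₀ * s)^2 := by
      rw [hsq, le_div_iff₀ hm2]; linarith
    calc |w| = Real.sqrt (|w|^2) := (Real.sqrt_sq (abs_nonneg w)).symm
      _ ≤ Real.sqrt ((C₀ * s)^2) := Real.sqrt_le_sqrt h3
      _ = C₀ * s := Real.sqrt_sq (by positivity)
  -- bootstrap for v
  have hβ' : c₂ / 2 ≤ s^3 * a11 := by
    have h1 : K * s * s ≤ K * s * 1 :=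
      mul_le_mul_of_nonneg_left hs1.le (by positivity)
    have h2 : K * s ^ 2 = K * s * s := by ring
    linarith
  have hveq : (s^3*a11) * v = s^3 * b 1 - s^2 * ((s*a01) * u) - s^2 * ((s*a12) * w) := by
    linear_combination s^3 * e1
  have hvbound : c₂/2 * |v| ≤ (K + 4*K*C₀) * s^3 := by
    have h1 : c₂/2 * |v| ≤ (s^3*a11) * |v| :=
      mul_le_mul_of_nonneg_right hβ' (abs_nonneg v)
    have h2 : (s^3*a11) * |v| = |(s^3*a11) * v| := by
      rw [abs_mul, abs_of_nonneg (by linarith : (0:ℝ) ≤ s^3*a11)]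
    have h3 : |(s^3*a11) * v| ≤ s^3 * K + s^2 * (2*K*(C₀*s)) + s^2 * (2*K*(C₀*s)) := by
      rw [hveq]
      have t1 : |s^3 * b 1| ≤ s^3 * K := by
        rw [abs_mul, abs_of_nonneg (by positivity : (0:ℝ) ≤ s^3)]
        exact mul_le_mul_of_nonneg_left hb1 (by positivity)
      have t2 : |s^2 * ((s*a01) * u)| ≤ s^2 * (2*K*(C₀*s)) := by
        rw [abs_mul, abs_of_nonneg (by positivity : (0:ℝ) ≤ s^2), abs_mul]
        have := mul_le_mul hp (habs_u) (abs_nonneg u) (by positivity : (0:ℝ) ≤ 2*K)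
        exact mul_le_mul_of_nonneg_left this (by positivity)
      have t3 : |s^2 * ((s*a12) * w)| ≤ s^2 * (2*K*(C₀*s)) := by
        rw [abs_mul, abs_of_nonneg (by positivity : (0:ℝ) ≤ s^2), abs_mul]
        have := mul_le_mul hq (habs_w) (abs_nonneg w) (by positivity : (0:ℝ) ≤ 2*K)
        exact mul_le_mul_of_nonneg_left this (by positivity)
      calc |s^3 * b 1 - s^2 * ((s*a01) * u) - s^2 * ((s*a12) * w)|
          ≤ |s^3 * b 1| + |s^2 * ((s*a01) * u)| + |s^2 * ((s*a12) * w)| := by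
            exact (abs_sub _ _).trans (by gcongr; exact abs_sub _ _)
        _ ≤ s^3 * K + s^2 * (2*K*(C₀*s)) + s^2 * (2*K*(C₀*s)) := by linarith
    have : c₂/2 * |v| ≤ s^3 * K + s^2 * (2*K*(C₀*s)) + s^2 * (2*K*(C₀*s)) := by
      rw [← h2] at h3; linarith
    linarith [this]
  have habs_v : |v| ≤ C * s^3 := by
    have h1 : |v| ≤ 2 * (K + 4*K*C₀) / c₂ * s^3 := by
      rw [div_mul_eq_mul_div, le_div_iff₀ hc₂]
      linarith [hvbound]
    calc |v| ≤ 2 * (K + 4*K*C₀) / c₂ * s^3 := h1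
      _ ≤ C * s^3 := mul_le_mul_of_nonneg_right hCb (by positivity)
  refine ⟨?_, ?_, ?_⟩
  · calc |u| ≤ C₀ * s := habs_u
      _ ≤ C * s := mul_le_mul_of_nonneg_right hC₀C hs0.le
  · rw [hr32]; exact habs_v
  · calc |w| ≤ C₀ * s := habs_w
      _ ≤ C * s := mul_le_mul_of_nonneg_right hC₀C hs0.le
end
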